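/- Let (G, S) be a rooted graph with μ(G, S) ≤ 1 such that G contains an S-cycle H-subdivision W for some graph H. Let T ⊆ V(W) be such that G − T has no S-cycle intersecting W in at most one vertex and G − T contains no W-extension. If G − T has no S-cycle containing a vertex of S ∩ V(W), then T is an S-cycle hitting set of G. -/

import Mathlib

open scoped Classical

/-- A finite multigraph (possibly with loops and parallel edges), with vertices and
edges labelled by natural numbers. `ends e` gives the (unordered) pair of endpoints. -/
structure Multigraph where
  verts : Finset ℕ
  edges : Finset ℕ
  ends : ℕ → Sym2 ℕ
  ends_mem : ∀ e ∈ edges, ∀ x ∈ ends e, x ∈ verts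

namespace Multigraph

/-- `W` is a subgraph of `G`. -/
def IsSubgraph (W G : Multigraph) : Prop :=
  W.verts ⊆ G.verts ∧ W.edges ⊆ G.edges ∧ ∀ e ∈ W.edges, W.ends e = G.ends e

/-- Delete a set of vertices (and all incident edges). -/
noncomputable def deleteVerts (G : Multigraph) (T : Finset ℕ) : Multigraph where
  verts := G.verts \ T
  edges := G.edges.filter (fun e => ∀ x ∈ G.ends e, x ∉ T)
  ends := G.ends
  ends_mem := by
    intro e he x hx
    rw [Finset.mem_filter] at he
    rw [Finset.mem_sdiff]
    exact ⟨G.ends_mem e he.1 x hx, he.2 x hx⟩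

/-- Delete a set of edges. -/
def deleteEdges (G : Multigraph) (X : Finset ℕ) : Multigraph where
  verts := G.verts
  edges := G.edges \ X
  ends := G.ends
  ends_mem := fun e he x hx => G.ends_mem e (Finset.mem_sdiff.mp he).1 x hx

/-- Union of two multigraphs. -/
noncomputable def union (W X : Multigraph) : Multigraph where
  verts := W.verts ∪ X.verts
  edges := W.edges ∪ X.edges
  ends := fun e => if e ∈ W.edges then W.ends e else X.ends e
  ends_mem := by
    intro e he x hx
    rw [Finset.mem_union] at he ⊢
    by_cases h : e ∈ W.edges
    · simp only [h, if_true] at hx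
      exact Or.inl (W.ends_mem e h x hx)
    · simp only [h, if_false] at hx
      exact Or.inr (X.ends_mem e (he.resolve_left h) x hx)

/-- The degree of a vertex in a multigraph; a loop contributes 2. -/
noncomputable def degree (W : Multigraph) (v : ℕ) : ℕ :=
  ∑ e ∈ W.edges, (if W.ends e = s(v, v) then 2 else if v ∈ W.ends e then 1 else 0)

/-- `vs = [v₀, …, vₙ]`, `es = [e₁, …, eₙ]` form a walk in `G`
(the `i`-th edge joins the `i`-th and `(i+1)`-st vertices). -/
def IsWalk (G : Multigraph) (vs es : List ℕ) : Prop :=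
  vs.length = es.length + 1 ∧
  (∀ v ∈ vs, v ∈ G.verts) ∧
  (∀ e ∈ es, e ∈ G.edges) ∧
  ∀ i, i < es.length → G.ends (es.getD i 0) = s(vs.getD i 0, vs.getD (i + 1) 0)

/-- `C` is a cycle of `G`: a subgraph of `G` consisting of (cyclically ordered) distinct
vertices `vs` and distinct edges `es`, the `i`-th edge joining consecutive vertices.
Loops and pairs of parallel edges count as cycles. -/
def IsCycleOf (G C : Multigraph) : Prop :=
  C.IsSubgraph G ∧
  ∃ vs es : List ℕ, vs.Nodup ∧ es.Nodup ∧ es ≠ [] ∧ vs.length = es.length ∧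
    C.verts = vs.toFinset ∧ C.edges = es.toFinset ∧
    ∀ i, i < es.length →
      C.ends (es.getD i 0) = s(vs.getD i 0, vs.getD ((i + 1) % vs.length) 0)

/-- An S-cycle of `(G, S)`: a cycle of `G` containing a vertex of `S`. -/
def IsSCycle (G : Multigraph) (S : Finset ℕ) (C : Multigraph) : Prop :=
  IsCycleOf G C ∧ (C.verts ∩ S).Nonempty

/-- `μ(G, S) ≤ 1`: there are no two vertex-disjoint S-cycles. -/
def MuLeOne (G : Multigraph) (S : Finset ℕ) : Prop :=
  ∀ C₁ C₂, IsSCycle G S C₁ → IsSCycle G S C₂ → ¬ Disjoint C₁.verts C₂.verts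

/-- `T` is an S-cycle hitting set of `(G, S)`. -/
def IsHittingSet (G : Multigraph) (S T : Finset ℕ) : Prop :=
  T ⊆ G.verts ∧ ∀ C, IsSCycle G S C → (C.verts ∩ T).Nonempty

/-- `τ(G, S) ≤ k`. -/
def TauLe (G : Multigraph) (S : Finset ℕ) (k : ℕ) : Prop :=
  ∃ T, IsHittingSet G S T ∧ T.card ≤ k

/-- `P` is a path graph with vertex list `vs` and edge list `es`. -/
def IsPathGraph (P : Multigraph) (vs es : List ℕ) : Prop :=
  vs.Nodup ∧ es.Nodup ∧ vs.length = es.length + 1 ∧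
  P.verts = vs.toFinset ∧ P.edges = es.toFinset ∧
  ∀ i, i < es.length → P.ends (es.getD i 0) = s(vs.getD i 0, vs.getD (i + 1) 0)

/-- `P` (with vertex list `vs` and edge list `es`) is a `W`-path in `G`:
a path with at least one edge, both endpoints in `W`, internal vertices outside `W`,
and using no edge of `W`. -/
def IsWPathList (G W P : Multigraph) (vs es : List ℕ) : Prop :=
  P.IsSubgraph G ∧ IsPathGraph P vs es ∧ es ≠ [] ∧
  vs.getD 0 0 ∈ W.verts ∧ vs.getD (vs.length - 1) 0 ∈ W.verts ∧
  (∀ i, 0 < i → i < vs.length - 1 → vs.getD i 0 ∉ W.verts) ∧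
  (∀ e ∈ es, e ∉ W.edges)

/-- `P` is a `W`-path in `G`. -/
def IsWPath (G W P : Multigraph) : Prop :=
  ∃ vs es, IsWPathList G W P vs es

/-- `P` is a `(W, F₁, F₂)`-path in `G`: a `W`-path with one endpoint in `F₁`
and the other in `F₂`. -/
def IsWPathBtw (G W P : Multigraph) (F₁ F₂ : Finset ℕ) : Prop :=
  ∃ vs es, IsWPathList G W P vs es ∧
    ((vs.getD 0 0 ∈ F₁ ∧ vs.getD (vs.length - 1) 0 ∈ F₂) ∨
     (vs.getD 0 0 ∈ F₂ ∧ vs.getD (vs.length - 1) 0 ∈ F₁))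

/-- `W` is an S-cycle subgraph of `(G, S)`: a subgraph whose every cycle is an S-cycle. -/
def IsSCycleSubgraph (G : Multigraph) (S : Finset ℕ) (W : Multigraph) : Prop :=
  W.IsSubgraph G ∧ ∀ C, IsCycleOf W C → (C.verts ∩ S).Nonempty

/-- `X` is a `W`-extension: a `W`-path such that `W ∪ X` is an S-cycle subgraph. -/
def IsWExtension (G : Multigraph) (S : Finset ℕ) (W X : Multigraph) : Prop :=
  IsWPath G W X ∧ IsSCycleSubgraph G S (W.union X)

/-- `G` is connected. -/
def Connected (G : Multigraph) : Prop :=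
  G.verts.Nonempty ∧
  ∀ u ∈ G.verts, ∀ v ∈ G.verts,
    ∃ vs es, IsWalk G vs es ∧ vs ≠ [] ∧ vs.getD 0 0 = u ∧ vs.getD (vs.length - 1) 0 = v

/-- `G` has no cycles. -/
def Acyclic (G : Multigraph) : Prop := ¬ ∃ C, IsCycleOf G C

/-- `X` separates the vertex sets `A` and `B` in `G`: after deleting `X`, there is no
walk from a vertex of `A` to a vertex of `B`. -/
def Separates (G : Multigraph) (X A B : Finset ℕ) : Prop :=
  ¬ ∃ vs es, IsWalk (G.deleteVerts X) vs es ∧ vs ≠ [] ∧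
      vs.getD 0 0 ∈ A ∧ vs.getD (vs.length - 1) 0 ∈ B

/-- `G` is a subdivision of `H`: each edge `e` of `H` is replaced by a path
(given by vertex list `pv e` and edge list `pe e`) between the images of its
endpoints under an injection `φ`; the paths are internally disjoint from each
other and from the branching vertices, and together they cover `G` exactly. -/
def IsSubdivisionOf (H G : Multigraph) : Prop :=
  ∃ (φ : ℕ → ℕ) (pv pe : ℕ → List ℕ),
    Set.InjOn φ ↑H.verts ∧
    (∀ v ∈ H.verts, φ v ∈ G.verts) ∧
    (∀ e ∈ H.edges,
      IsWalk G (pv e) (pe e) ∧ pe e ≠ [] ∧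
      (pv e).dropLast.Nodup ∧ (pv e).tail.Nodup ∧
      (∃ u v, H.ends e = s(u, v) ∧ (pv e).getD 0 0 = φ u ∧
        (pv e).getD ((pv e).length - 1) 0 = φ v) ∧
      (∀ x ∈ (pv e).tail.dropLast, ∀ w ∈ H.verts, x ≠ φ w)) ∧
    (∀ e ∈ H.edges, ∀ f ∈ H.edges, e ≠ f →
      (∀ x ∈ (pv e).tail.dropLast, x ∉ (pv f).toFinset) ∧
      (∀ a ∈ pe e, a ∉ pe f)) ∧
    G.verts = H.verts.image φ ∪ H.edges.biUnion (fun e => (pv e).toFinset) ∧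
    G.edges = H.edges.biUnion (fun e => (pe e).toFinset)

/-- `W` is an S-cycle `H`-subdivision in `(G, S)`: a subgraph of `G` that is a
subdivision of `H` and in which every cycle is an S-cycle. -/
def IsSCycleSubdivision (G : Multigraph) (S : Finset ℕ) (H W : Multigraph) : Prop :=
  W.IsSubgraph G ∧ IsSubdivisionOf H W ∧ ∀ C, IsCycleOf W C → (C.verts ∩ S).Nonempty

/-- Build a multigraph on vertex set `{0, …, n-1}` whose edges are `0, …, l.length - 1`,
with the `i`-th edge joining the pair `l[i]`. -/
def mkGraph (n : ℕ) (l : List (ℕ × ℕ)) (h : ∀ p ∈ l, p.1 < n ∧ p.2 < n) : Multigraph where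
  verts := Finset.range n
  edges := Finset.range l.length
  ends := fun e => s((l.getD e (0, 0)).1, (l.getD e (0, 0)).2)
  ends_mem := by
    intro e he x hx
    rw [Finset.mem_range] at he
    have hm : l.getD e (0, 0) ∈ l := by
      rw [List.getD_eq_getElem l (0, 0) he]
      exact List.getElem_mem he
    rw [Sym2.mem_iff] at hx
    rw [Finset.mem_range]
    rcases hx with h1 | h2
    · exact h1 ▸ (h _ hm).1
    · exact h2 ▸ (h _ hm).2

/-- `θ₃`: two vertices joined by three parallel edges. -/
def theta3 : Multigraph := mkGraph 2 [(0,1),(0,1),(0,1)] (by decide)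

/-- `K₃⁺`: the triangle with a parallel edge added to each of two distinct edges. -/
def K3plus : Multigraph := mkGraph 3 [(0,1),(1,2),(2,0),(0,1),(1,2)] (by decide)

/-- `K₃⁺⁺⁺`: the triangle with a parallel edge added to every edge and one further
parallel edge added to one edge. -/
def K3ppp : Multigraph := mkGraph 3 [(0,1),(1,2),(2,0),(0,1),(1,2),(2,0),(0,1)] (by decide)

/-- The complete graph `K₄`. -/
def K4 : Multigraph := mkGraph 4 [(0,1),(0,2),(0,3),(1,2),(1,3),(2,3)] (by decide)

/-- `K₄⁺⁺`: `K₄` with a parallel edge added to each of two incident edges. -/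
def K4pp : Multigraph := mkGraph 4 [(0,1),(0,2),(0,3),(1,2),(1,3),(2,3),(0,1),(0,2)] (by decide)

/-- `K₄⁺⁺⁺`: `K₄` with two parallel edges added to one edge. -/
def K4ppp : Multigraph := mkGraph 4 [(0,1),(0,2),(0,3),(1,2),(1,3),(2,3),(0,1),(0,1)] (by decide)

/-- The wheel `W₄`: a 4-cycle `0123` plus a hub `4` joined to all rim vertices. -/
def W4 : Multigraph := mkGraph 5 [(0,1),(1,2),(2,3),(3,0),(4,0),(4,1),(4,2),(4,3)] (by decide)

/-- `W₄⁺`: `W₄` with a parallel edge added between the hub and one rim vertex. -/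
def W4plus : Multigraph :=
  mkGraph 5 [(0,1),(1,2),(2,3),(3,0),(4,0),(4,1),(4,2),(4,3),(4,0)] (by decide)

/-- `W₄*`: `W₄` with an edge added between two rim vertices at distance 2. -/
def W4star : Multigraph :=
  mkGraph 5 [(0,1),(1,2),(2,3),(3,0),(4,0),(4,1),(4,2),(4,3),(0,2)] (by decide)

/-- The wheel `W₅`: a 5-cycle plus a hub joined to all rim vertices. -/
def W5 : Multigraph :=
  mkGraph 6 [(0,1),(1,2),(2,3),(3,4),(4,0),(5,0),(5,1),(5,2),(5,3),(5,4)] (by decide)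

/-- The complete bipartite graph `K₃,₃` with parts `{0,1,2}` and `{3,4,5}`. -/
def K33 : Multigraph :=
  mkGraph 6 [(0,3),(0,4),(0,5),(1,3),(1,4),(1,5),(2,3),(2,4),(2,5)] (by decide)

/-- `K₃,₃⁺`: `K₃,₃` with an edge added between two vertices in the same part. -/
def K33plus : Multigraph :=
  mkGraph 6 [(0,3),(0,4),(0,5),(1,3),(1,4),(1,5),(2,3),(2,4),(2,5),(0,1)] (by decide)

end Multigraph

/-!
Suppose an S-cycle `C` avoids `T`. Then `C` is an S-cycle of `G − T`, so it meets `W` in at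
least two vertices, while its vertices in `S` lie outside `W`. Walking along `C` in both
directions from such a vertex `s` until `W` is reached gives a `W`-path `P ⊆ C` through `s`.
Every interior vertex of `P` has degree two in `W ∪ P`, so a cycle of `W ∪ P` either lies in `W`
or contains all of `P`; in both cases it meets `S`. Thus `P` is a `W`-extension avoiding `T`.
-/

namespace List

variable {l : List ℕ} {i : ℕ}

theorem getD_mem_toFinset (h : i < l.length) : l.getD i 0 ∈ l.toFinset := by
  rw [getD_eq_getElem _ _ h]
  exact mem_toFinset.2 (getElem_mem h)

theorem exists_getD_eq_of_mem_toFinset {x : ℕ} (h : x ∈ l.toFinset) :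
    ∃ i < l.length, l.getD i 0 = x := by
  obtain ⟨i, hi, rfl⟩ := mem_iff_getElem.1 (mem_toFinset.1 h)
  exact ⟨i, hi, getD_eq_getElem _ _ hi⟩

theorem Nodup.getD_inj (hl : l.Nodup) {j : ℕ} (hi : i < l.length) (hj : j < l.length)
    (h : l.getD i 0 = l.getD j 0) : i = j := by
  rw [getD_eq_getElem _ _ hi, getD_eq_getElem _ _ hj] at h
  exact (hl.getElem_inj_iff).1 h

theorem getD_take_of_lt {t : ℕ} (hit : i < t) (hi : i < l.length) :
    (l.take t).getD i 0 = l.getD i 0 := by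
  rw [getD_eq_getElem _ _ (by rw [length_take]; omega), getD_eq_getElem _ _ hi, getElem_take]

theorem getD_rotate (r : ℕ) (hi : i < l.length) :
    (l.rotate r).getD i 0 = l.getD ((i + r) % l.length) 0 := by
  rw [getD_eq_getElem _ _ (by simpa using hi), getD_eq_getElem _ _ (Nat.mod_lt _ (by omega)),
    getElem_rotate]

theorem getD_rotate_of_add_lt {r : ℕ} (h : i + r < l.length) :
    (l.rotate r).getD i 0 = l.getD (i + r) 0 := by
  rw [getD_rotate r (by omega), Nat.mod_eq_of_lt h]

theorem getD_rotate_of_le_add {r : ℕ} (hi : i < l.length) (hr : r < l.length)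
    (h : l.length ≤ i + r) : (l.rotate r).getD i 0 = l.getD (i + r - l.length) 0 := by
  rw [getD_rotate r hi, Nat.mod_eq_sub_mod h, Nat.mod_eq_of_lt (by omega)]

theorem exists_first_last_getD_mem {A : Finset ℕ} (h0 : l.getD 0 0 ∉ A)
    (hA : 2 ≤ (l.toFinset ∩ A).card) :
    ∃ j k, 0 < j ∧ j < k ∧ k < l.length ∧ l.getD j 0 ∈ A ∧ l.getD k 0 ∈ A ∧
      ∀ i < l.length, l.getD i 0 ∈ A → j ≤ i ∧ i ≤ k := by
  obtain ⟨a, ha, b, hb, hab⟩ := Finset.one_lt_card.1 hA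
  rw [Finset.mem_inter] at ha hb
  obtain ⟨ia, hia, rfl⟩ := exists_getD_eq_of_mem_toFinset ha.1
  obtain ⟨ib, hib, rfl⟩ := exists_getD_eq_of_mem_toFinset hb.1
  set I := (Finset.range l.length).filter (fun i => l.getD i 0 ∈ A)
  have hI : ∀ {i}, i ∈ I ↔ i < l.length ∧ l.getD i 0 ∈ A := by simp [I]
  have haI : ia ∈ I := hI.2 ⟨hia, ha.2⟩
  have hjI := hI.1 (I.min'_mem ⟨ia, haI⟩)
  have hkI := hI.1 (I.max'_mem ⟨ia, haI⟩)
  refine ⟨_, _, Nat.pos_of_ne_zero fun h => h0 (by simpa [h] using hjI.2),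
    I.min'_lt_max' haI (hI.2 ⟨hib, hb.2⟩) (ne_of_apply_ne (fun i => l.getD i 0) hab), hkI.1,
    hjI.2, hkI.2,
    fun i hi hiA => ⟨I.min'_le i (hI.2 ⟨hi, hiA⟩), I.le_max' i (hI.2 ⟨hi, hiA⟩)⟩⟩

/-- `(l.rotate r).take (m + 1)` is a cyclic segment of `l` between two cyclically consecutive
entries in `A`, passing through `s`. -/
theorem exists_rotate_arc {A : Finset ℕ} {s : ℕ} (hs : s ∈ l.toFinset) (hsA : s ∉ A)
    (hA : 2 ≤ (l.toFinset ∩ A).card) :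
    ∃ r m p, 0 < p ∧ p < m ∧ m < l.length ∧
      (l.rotate r).getD 0 0 ∈ A ∧ (l.rotate r).getD m 0 ∈ A ∧
      (∀ t, 0 < t → t < m → (l.rotate r).getD t 0 ∉ A) ∧ (l.rotate r).getD p 0 = s := by
  obtain ⟨i, hi, rfl⟩ := exists_getD_eq_of_mem_toFinset hs
  have hl := length_rotate l i
  have h0 : (l.rotate i).getD 0 0 = l.getD i 0 := by
    rw [getD_rotate_of_add_lt (by omega), zero_add]
  rw [← h0] at hsA ⊢
  rw [← List.toFinset_eq_of_perm _ _ (rotate_perm l i)] at hA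
  obtain ⟨j, k, hj0, hjk, hkn, hjA, hkA, hext⟩ := exists_first_last_getD_mem hsA hA
  refine ⟨i + k, l.length - k + j, l.length - k, by omega, by omega, by omega, ?_⟩
  rw [← rotate_rotate]
  refine ⟨?_, ?_, fun t ht0 htm hA => ?_, ?_⟩
  · rwa [getD_rotate_of_add_lt (by omega), zero_add]
  · rwa [getD_rotate_of_le_add (by omega) hkn (by omega), hl,
      show l.length - k + j + k - l.length = j by omega]
  · by_cases htk : t + k < l.length
    · rw [getD_rotate_of_add_lt (by omega)] at hA
      have := (hext _ (by omega) hA).2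
      omega
    · rw [getD_rotate_of_le_add (by omega) hkn (by omega), hl] at hA
      rcases Nat.eq_zero_or_pos (t + k - l.length) with h | h
      · exact hsA (h ▸ hA)
      · have := (hext _ (by omega) hA).1
        omega
  · rw [getD_rotate_of_le_add (by omega) hkn (by omega), hl,
      show l.length - k + k - l.length = 0 by omega]

end List

namespace Multigraph

variable {G C D P W X : Multigraph} {S T : Finset ℕ} {vs es : List ℕ}

theorem IsSubgraph.trans (hCP : C.IsSubgraph P) (hPG : P.IsSubgraph G) : C.IsSubgraph G :=
  ⟨hCP.1.trans hPG.1, hCP.2.1.trans hPG.2.1,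
    fun e he => (hCP.2.2 e he).trans (hPG.2.2 e (hCP.2.1 he))⟩

theorem union_ends_of_mem {e : ℕ} (he : e ∈ W.edges) : (W.union X).ends e = W.ends e :=
  if_pos he

theorem union_ends_of_not_mem {e : ℕ} (he : e ∉ W.edges) : (W.union X).ends e = X.ends e :=
  if_neg he

theorem IsSubgraph.union (hW : W.IsSubgraph G) (hX : X.IsSubgraph G) :
    (W.union X).IsSubgraph G := by
  refine ⟨Finset.union_subset hW.1 hX.1, Finset.union_subset hW.2.1 hX.2.1, fun e he => ?_⟩
  by_cases heW : e ∈ W.edges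
  · rw [union_ends_of_mem heW, hW.2.2 e heW]
  · rw [union_ends_of_not_mem heW, hX.2.2 e ((Finset.mem_union.1 he).resolve_left heW)]

theorem IsSubgraph.deleteVerts (hC : C.IsSubgraph G) (hT : Disjoint C.verts T) :
    C.IsSubgraph (G.deleteVerts T) := by
  refine ⟨fun x hx => Finset.mem_sdiff.2 ⟨hC.1 hx, Finset.disjoint_left.1 hT hx⟩,
    fun e he => Finset.mem_filter.2 ⟨hC.2.1 he, fun x hx => ?_⟩, hC.2.2⟩
  rw [← hC.2.2 e he] at hx
  exact Finset.disjoint_left.1 hT (C.ends_mem e he x hx)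

theorem IsCycleOf.deleteVerts (hC : IsCycleOf G C) (hT : Disjoint C.verts T) :
    IsCycleOf (G.deleteVerts T) C :=
  ⟨hC.1.deleteVerts hT, hC.2⟩

def IsCycleGraph (C : Multigraph) (vs es : List ℕ) : Prop :=
  vs.Nodup ∧ es.Nodup ∧ es ≠ [] ∧ vs.length = es.length ∧
  C.verts = vs.toFinset ∧ C.edges = es.toFinset ∧
  ∀ i, i < es.length → C.ends (es.getD i 0) = s(vs.getD i 0, vs.getD ((i + 1) % vs.length) 0)

theorem isCycleOf_iff : IsCycleOf G C ↔ C.IsSubgraph G ∧ ∃ vs es, IsCycleGraph C vs es :=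
  Iff.rfl

theorem IsCycleGraph.rotate (hC : IsCycleGraph C vs es) (r : ℕ) :
    IsCycleGraph C (vs.rotate r) (es.rotate r) := by
  obtain ⟨hvs, hes, hne, hlen, hV, hE, hends⟩ := hC
  have hn : 0 < es.length := List.length_pos_iff.2 hne
  refine ⟨List.nodup_rotate.2 hvs, List.nodup_rotate.2 hes, by simpa using hne, by simp [hlen],
    hV.trans (List.toFinset_eq_of_perm _ _ (vs.rotate_perm r)).symm,
    hE.trans (List.toFinset_eq_of_perm _ _ (es.rotate_perm r)).symm, fun i hi => ?_⟩
  rw [List.length_rotate] at hi ⊢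
  rw [List.getD_rotate r hi, hends _ (Nat.mod_lt _ hn), List.getD_rotate r (by omega),
    List.getD_rotate r (Nat.mod_lt _ (by omega)), hlen, Nat.mod_add_mod, Nat.mod_add_mod,
    Nat.add_right_comm]

/-- The second alternative only occurs for a cycle consisting of a single loop. -/
theorem IsCycleGraph.exists_edges_of_mem_verts (hC : IsCycleGraph C vs es) {v : ℕ}
    (hv : v ∈ C.verts) :
    ∃ e₁ ∈ C.edges, ∃ e₂ ∈ C.edges, v ∈ C.ends e₁ ∧ v ∈ C.ends e₂ ∧
      (e₁ ≠ e₂ ∨ (C.ends e₁).IsDiag) := by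
  obtain ⟨hvs, hes, hne, hlen, hV, hE, hends⟩ := hC
  have hn : 0 < es.length := List.length_pos_iff.2 hne
  rw [hV] at hv
  obtain ⟨i, hi, rfl⟩ := List.exists_getD_eq_of_mem_toFinset hv
  obtain ⟨j, hj, hji, hji'⟩ :
      ∃ j < es.length, (j + 1) % vs.length = i ∧ (1 < es.length → j ≠ i) := by
    rcases i with _ | i
    · exact ⟨es.length - 1, by omega, by rw [hlen, Nat.sub_add_cancel hn, Nat.mod_self],
        by omega⟩
    · exact ⟨i, by omega, Nat.mod_eq_of_lt hi, by omega⟩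
  refine ⟨es.getD j 0, hE ▸ List.getD_mem_toFinset hj, es.getD i 0,
    hE ▸ List.getD_mem_toFinset (by omega), ?_, ?_, ?_⟩
  · rw [hends j hj, hji]
    exact Sym2.mem_mk_right _ _
  · rw [hends i (by omega)]
    exact Sym2.mem_mk_left _ _
  · rcases Nat.lt_or_ge 1 es.length with h1 | h1
    · exact Or.inl fun h => hji' h1 (hes.getD_inj hj (by omega) h)
    · right
      rw [hends j hj, hji, Sym2.mk_isDiag_iff, show j = i by omega]

theorem IsCycleGraph.exists_isPathGraph_take (hC : IsCycleGraph C vs es) {m : ℕ}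
    (hm : m < vs.length) :
    ∃ P, P.IsSubgraph C ∧ IsPathGraph P (vs.take (m + 1)) (es.take m) := by
  obtain ⟨hvs, hes, -, hlen, hV, hE, hends⟩ := hC
  have hends' : ∀ i < m, C.ends (es.getD i 0) = s(vs.getD i 0, vs.getD (i + 1) 0) :=
    fun i hi => by rw [hends i (by omega), Nat.mod_eq_of_lt (show i + 1 < vs.length by omega)]
  have hv : ∀ i ≤ m, vs.getD i 0 ∈ (vs.take (m + 1)).toFinset := fun i hi => by
    rw [← List.getD_take_of_lt (t := m + 1) (by omega) (by omega)]
    exact List.getD_mem_toFinset (by rw [List.length_take]; omega)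
  refine ⟨⟨(vs.take (m + 1)).toFinset, (es.take m).toFinset, C.ends, fun e he x hx => ?_⟩,
    ⟨?_, ?_, fun e _ => rfl⟩, ?_⟩
  · obtain ⟨i, hi, rfl⟩ := List.exists_getD_eq_of_mem_toFinset he
    rw [List.length_take] at hi
    rw [List.getD_take_of_lt (by omega) (by omega), hends' i (by omega), Sym2.mem_iff] at hx
    rcases hx with rfl | rfl
    exacts [hv i (by omega), hv (i + 1) (by omega)]
  · exact hV ▸ fun x hx => List.mem_toFinset.2 (List.take_subset _ _ (List.mem_toFinset.1 hx))
  · exact hE ▸ fun e he => List.mem_toFinset.2 (List.take_subset _ _ (List.mem_toFinset.1 he))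
  · refine ⟨(List.take_sublist _ _).nodup hvs, (List.take_sublist _ _).nodup hes,
      by simp only [List.length_take]; omega, rfl, rfl, fun i hi => ?_⟩
    rw [List.length_take] at hi
    rw [List.getD_take_of_lt (by omega) (by omega), List.getD_take_of_lt (by omega) (by omega),
      List.getD_take_of_lt (by omega) (by omega)]
    exact hends' i (by omega)

theorem IsPathGraph.isWPathList (hPG : P.IsSubgraph G) (hWG : W.IsSubgraph G)
    (hP : IsPathGraph P vs es) (hlen : 2 ≤ es.length) (h0 : vs.getD 0 0 ∈ W.verts)
    (hlast : vs.getD (vs.length - 1) 0 ∈ W.verts)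
    (hint : ∀ i, 0 < i → i < vs.length - 1 → vs.getD i 0 ∉ W.verts) :
    IsWPathList G W P vs es := by
  refine ⟨hPG, hP, List.ne_nil_of_length_pos (by omega), h0, hlast, hint, fun e he heW => ?_⟩
  obtain ⟨-, -, hlenv, -, hE, hPends⟩ := hP
  obtain ⟨i, hi, rfl⟩ := List.exists_getD_eq_of_mem_toFinset (List.mem_toFinset.2 he)
  have hends : W.ends (es.getD i 0) = s(vs.getD i 0, vs.getD (i + 1) 0) := by
    rw [hWG.2.2 _ heW, ← hPG.2.2 _ (hE ▸ List.mem_toFinset.2 he), hPends i hi]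
  rcases Nat.eq_zero_or_pos i with rfl | hi0
  · exact hint 1 one_pos (by omega) (W.ends_mem _ heW _ (hends ▸ Sym2.mem_mk_right _ _))
  · exact hint i hi0 (by omega) (W.ends_mem _ heW _ (hends ▸ Sym2.mem_mk_left _ _))

theorem IsCycleOf.of_union_of_edges_subset (hD : IsCycleOf (W.union X) D)
    (hDW : D.edges ⊆ W.edges) : IsCycleOf W D := by
  obtain ⟨hDU, vs, es, hcyc⟩ := isCycleOf_iff.1 hD
  have hends : ∀ e ∈ D.edges, D.ends e = W.ends e :=
    fun e he => (hDU.2.2 e he).trans (union_ends_of_mem (hDW he))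
  refine ⟨⟨fun v hv => ?_, hDW, hends⟩, hD.2⟩
  obtain ⟨e, he, -, -, hve, -⟩ := hcyc.exists_edges_of_mem_verts hv
  rw [hends e he] at hve
  exact W.ends_mem e (hDW he) v hve

namespace IsWPathList

theorem union_ends (hP : IsWPathList G W P vs es) {t : ℕ} (ht : t < es.length) :
    (W.union P).ends (es.getD t 0) = s(vs.getD t 0, vs.getD (t + 1) 0) := by
  obtain ⟨-, ⟨-, -, -, -, -, hends⟩, -, -, -, -, hnW⟩ := hP
  rw [union_ends_of_not_mem (hnW _ (List.mem_toFinset.1 (List.getD_mem_toFinset ht)))]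
  exact hends t ht

theorem not_isDiag_union_ends (hP : IsWPathList G W P vs es) {t : ℕ} (ht : t < es.length) :
    ¬ ((W.union P).ends (es.getD t 0)).IsDiag := by
  rw [hP.union_ends ht, Sym2.mk_isDiag_iff]
  obtain ⟨-, ⟨hvs, -, hlen, -⟩, -⟩ := hP
  intro h
  have := hvs.getD_inj (by omega) (by omega) h
  omega

theorem eq_or_eq_of_mem_union_ends (hP : IsWPathList G W P vs es) {c : ℕ} (hc0 : 0 < c)
    (hc : c < es.length) {e : ℕ} (he : e ∈ (W.union P).edges)
    (hv : vs.getD c 0 ∈ (W.union P).ends e) : e = es.getD (c - 1) 0 ∨ e = es.getD c 0 := by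
  have ⟨_, ⟨hvs, _, hlen, _, hE, _⟩, _, _, _, hint, _⟩ := hP
  rcases Finset.mem_union.1 he with heW | heP
  · rw [union_ends_of_mem heW] at hv
    exact absurd (W.ends_mem e heW _ hv) (hint c hc0 (by omega))
  · rw [hE] at heP
    obtain ⟨t, ht, rfl⟩ := List.exists_getD_eq_of_mem_toFinset heP
    rw [hP.union_ends ht, Sym2.mem_iff] at hv
    rcases hv with h | h
    · exact Or.inr (by rw [hvs.getD_inj (by omega) (by omega) h])
    · have := hvs.getD_inj (by omega) (by omega) h
      exact Or.inl (by rw [show c - 1 = t by omega])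

theorem mem_edges_iff_of_isCycleOf (hP : IsWPathList G W P vs es) (hD : IsCycleOf (W.union P) D)
    {c : ℕ} (hc0 : 0 < c) (hc : c < es.length) :
    es.getD (c - 1) 0 ∈ D.edges ↔ es.getD c 0 ∈ D.edges := by
  obtain ⟨hDU, vs', es', hcyc⟩ := isCycleOf_iff.1 hD
  suffices hv :
      vs.getD c 0 ∈ D.verts → es.getD (c - 1) 0 ∈ D.edges ∧ es.getD c 0 ∈ D.edges by
    refine ⟨fun h => (hv (D.ends_mem _ h _ ?_)).2, fun h => (hv (D.ends_mem _ h _ ?_)).1⟩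
    · rw [hDU.2.2 _ h, hP.union_ends (by omega), Nat.sub_add_cancel hc0]
      exact Sym2.mem_mk_right _ _
    · rw [hDU.2.2 _ h, hP.union_ends hc]
      exact Sym2.mem_mk_left _ _
  intro hv
  obtain ⟨e₁, he₁, e₂, he₂, hv₁, hv₂, h12⟩ := hcyc.exists_edges_of_mem_verts hv
  rw [hDU.2.2 _ he₁] at hv₁ h12
  rw [hDU.2.2 _ he₂] at hv₂
  have h₁ := hP.eq_or_eq_of_mem_union_ends hc0 hc (hDU.2.1 he₁) hv₁
  have h₂ := hP.eq_or_eq_of_mem_union_ends hc0 hc (hDU.2.1 he₂) hv₂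
  have hne : e₁ ≠ e₂ := h12.resolve_right <| by
    rcases h₁ with rfl | rfl
    exacts [hP.not_isDiag_union_ends (by omega), hP.not_isDiag_union_ends hc]
  rcases h₁ with rfl | rfl <;> rcases h₂ with rfl | rfl
  exacts [absurd rfl hne, ⟨he₁, he₂⟩, ⟨he₂, he₁⟩, absurd rfl hne]

theorem getD_mem_edges_of_isCycleOf (hP : IsWPathList G W P vs es)
    (hD : IsCycleOf (W.union P) D) {t : ℕ} (ht : t < es.length) (htD : es.getD t 0 ∈ D.edges)
    {i : ℕ} (hi : i < es.length) : es.getD i 0 ∈ D.edges := by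
  have hall : ∀ i < es.length, es.getD i 0 ∈ D.edges ↔ es.getD 0 0 ∈ D.edges := by
    intro i
    induction i with
    | zero => simp
    | succ i ih =>
      intro hi
      rw [← ih (by omega), ← hP.mem_edges_iff_of_isCycleOf hD i.succ_pos hi, Nat.succ_sub_one]
  exact (hall i hi).2 ((hall t ht).1 htD)

theorem isSCycleSubgraph_union (hP : IsWPathList G W P vs es) (hW : IsSCycleSubgraph G S W)
    {p : ℕ} (hp : p < es.length) (hpS : vs.getD p 0 ∈ S) :
    IsSCycleSubgraph G S (W.union P) := by
  refine ⟨hW.1.union hP.1, fun D hD => ?_⟩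
  by_cases hDW : D.edges ⊆ W.edges
  · exact hW.2 D (hD.of_union_of_edges_subset hDW)
  · obtain ⟨e, heD, heW⟩ := Finset.not_subset.1 hDW
    have heP := (Finset.mem_union.1 (hD.1.2.1 heD)).resolve_left heW
    have ⟨_, ⟨_, _, _, _, hE, _⟩, _⟩ := hP
    rw [hE] at heP
    obtain ⟨t, ht, rfl⟩ := List.exists_getD_eq_of_mem_toFinset heP
    have hpD := hP.getD_mem_edges_of_isCycleOf hD ht heD hp
    refine ⟨vs.getD p 0, Finset.mem_inter.2 ⟨D.ends_mem _ hpD _ ?_, hpS⟩⟩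
    rw [hD.1.2.2 _ hpD, hP.union_ends hp]
    exact Sym2.mem_mk_left _ _

end IsWPathList

theorem IsCycleOf.exists_isWExtension_subset (hW : IsSCycleSubgraph G S W)
    (hC : IsCycleOf G C) {s : ℕ} (hsC : s ∈ C.verts) (hsS : s ∈ S) (hsW : s ∉ W.verts)
    (hCW : 2 ≤ (C.verts ∩ W.verts).card) :
    ∃ X, IsWExtension G S W X ∧ X.verts ⊆ C.verts := by
  obtain ⟨hCG, vs, es, hcyc⟩ := isCycleOf_iff.1 hC
  have ⟨_, _, _, hlen, hV, _⟩ := hcyc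
  rw [hV] at hsC hCW
  obtain ⟨r, m, p, hp0, hpm, hmn, h0, hm, hint, rfl⟩ := List.exists_rotate_arc hsC hsW hCW
  have hlv := vs.length_rotate r
  have hle := es.length_rotate r
  obtain ⟨P, hPC, hPpath⟩ := (hcyc.rotate r).exists_isPathGraph_take (m := m) (by omega)
  have htake : ∀ i ≤ m, ((vs.rotate r).take (m + 1)).getD i 0 = (vs.rotate r).getD i 0 :=
    fun i hi => List.getD_take_of_lt (by omega) (by omega)
  have hlenP : ((vs.rotate r).take (m + 1)).length = m + 1 := by
    rw [List.length_take]; omega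
  have hlenE : ((es.rotate r).take m).length = m := by
    rw [List.length_take]; omega
  have hPW : IsWPathList G W P ((vs.rotate r).take (m + 1)) ((es.rotate r).take m) := by
    refine hPpath.isWPathList (hPC.trans hCG) hW.1 (by omega) (by rwa [htake 0 (by omega)])
      (by rwa [hlenP, Nat.add_sub_cancel, htake m le_rfl]) fun t ht0 htm => ?_
    rw [htake t (by omega)]
    exact hint t ht0 (by omega)
  exact ⟨P, ⟨⟨_, _, hPW⟩, hPW.isSCycleSubgraph_union hW (p := p) (by omega)
    (by rwa [htake p (by omega)])⟩, hPC.1⟩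

end Multigraph

open Multigraph in
theorem hitting_set_of_no_scycle_through_W_general
    (G : Multigraph) (S : Finset ℕ)
    (H W : Multigraph) (hW : IsSCycleSubdivision G S H W)
    (T : Finset ℕ) (hT : T ⊆ W.verts)
    (h1 : ∀ C, IsSCycle (G.deleteVerts T) S C → ¬ (C.verts ∩ W.verts).card ≤ 1)
    (h2 : ¬ ∃ X, IsWExtension G S W X ∧ Disjoint X.verts T)
    (h3 : ¬ ∃ C, IsSCycle (G.deleteVerts T) S C ∧ ∃ x ∈ C.verts, x ∈ S ∩ W.verts) :
    IsHittingSet G S T := by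
  refine ⟨hT.trans hW.1.1, fun C hC => ?_⟩
  by_contra hCT
  rw [Finset.not_nonempty_iff_eq_empty, ← Finset.disjoint_iff_inter_eq_empty] at hCT
  have hC' : IsSCycle (G.deleteVerts T) S C := ⟨hC.1.deleteVerts hCT, hC.2⟩
  obtain ⟨s, hs⟩ := hC.2
  rw [Finset.mem_inter] at hs
  have hsW : s ∉ W.verts := fun hsW =>
    h3 ⟨C, hC', s, hs.1, Finset.mem_inter.2 ⟨hs.2, hsW⟩⟩
  obtain ⟨X, hX, hXC⟩ := hC.1.exists_isWExtension_subset ⟨hW.1, hW.2.2⟩ hs.1 hs.2 hsW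
    (by have := h1 C hC'; omega)
  exact h2 ⟨X, hX, hCT.mono_left hXC⟩

open Multigraph in
/-- Let `(G, S)` be a rooted graph with `μ(G, S) ≤ 1` containing an S-cycle
`H`-subdivision `W` for some graph `H`, and let `T ⊆ V(W)` be such that `G − T` has no
S-cycle intersecting `W` in at most one vertex, and no `W`-extension avoiding `T`
exists.  If `G − T` has no S-cycle containing a vertex of `S ∩ V(W)`, then `T` is an
S-cycle hitting set of `G`. -/
theorem hitting_set_of_no_scycle_through_W
    (G : Multigraph) (S : Finset ℕ) (hS : S ⊆ G.verts) (hmu : MuLeOne G S)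
    (H W : Multigraph) (hW : IsSCycleSubdivision G S H W)
    (T : Finset ℕ) (hT : T ⊆ W.verts)
    (h1 : ∀ C, IsSCycle (G.deleteVerts T) S C → ¬ (C.verts ∩ W.verts).card ≤ 1)
    (h2 : ¬ ∃ X, IsWExtension G S W X ∧ Disjoint X.verts T)
    (h3 : ¬ ∃ C, IsSCycle (G.deleteVerts T) S C ∧ ∃ x ∈ C.verts, x ∈ S ∩ W.verts) :
    IsHittingSet G S T :=
  hitting_set_of_no_scycle_through_W_general G S H W hW T hT h1 h2 h3
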